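/- arXiv:2211.02583 — 2 statements merged into one kernel-verified Lean document; each statement's English description precedes it below -/
import Mathlib

section
/- For constants Λ₀ > 0, γ > 0, and α ∈ (0,1), the Laplace transform of λ(t) = Λ₀/(1-α) - (αΛ₀/(1-α)) e^{(1-α)²γ²t} erfc((1-α)γ√t) is λ̃(s) = (Λ₀/s)·(γ + √s)/((1-α)γ + √s) for s > (1-α)²γ². -/
/-!
With `a = (1 - α) γ` the intensity is a constant minus a multiple of `exp (a² t) erfc (a √t)`,
whose Laplace transform is `1 / (√s (a + √s))`. To compute it, differentiate
`exp ((a² - s) t) erfc (a √t)`: the derivative is `(a² - s)` times the function itself minus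
`(a / √π) exp (-s t) / √t`. Integrating over `(0, ∞)` and using the Gamma integral
`∫ exp (-s t) / √t = √π / √s` leaves a linear equation for the transform.
-/

noncomputable def erfc (x : ℝ) : ℝ := 1 - (2 / Real.sqrt Real.pi) * ∫ τ in (0:ℝ)..x, Real.exp (-τ^2)

open MeasureTheory Real Set Filter Topology

lemma erfc_zero : erfc 0 = 1 := by simp [erfc]

lemma hasDerivAt_erfc (x : ℝ) : HasDerivAt erfc (-(2 / √π * exp (-x ^ 2))) x := by
  have hc : Continuous fun τ : ℝ => exp (-τ ^ 2) := by fun_prop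
  exact ((intervalIntegral.integral_hasDerivAt_right (hc.intervalIntegrable 0 x)
    (hc.stronglyMeasurableAtFilter _ _) hc.continuousAt).const_mul _).const_sub 1

@[fun_prop]
lemma continuous_erfc : Continuous erfc :=
  continuous_iff_continuousAt.2 fun x => (hasDerivAt_erfc x).continuousAt

lemma abs_integral_exp_neg_sq_le (x : ℝ) :
    |∫ τ in (0:ℝ)..x, exp (-τ ^ 2)| ≤ √π / 2 := by
  wlog hx : 0 ≤ x generalizing x
  · have hneg : ∫ τ in (0:ℝ)..x, exp (-τ ^ 2) = -∫ τ in (0:ℝ)..-x, exp (-τ ^ 2) := by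
      have h := intervalIntegral.integral_comp_neg (a := 0) (b := x) fun τ : ℝ => exp (-τ ^ 2)
      simp only [neg_sq, neg_zero] at h
      rw [h, intervalIntegral.integral_symm]
    rw [hneg, abs_neg]
    exact this (-x) (by linarith)
  have hint : IntegrableOn (fun τ : ℝ => exp (-τ ^ 2)) (Ioi 0) := by
    simpa using (integrable_exp_neg_mul_sq one_pos).integrableOn
  rw [abs_of_nonneg (intervalIntegral.integral_nonneg hx fun _ _ => (exp_pos _).le),
    intervalIntegral.integral_of_le hx]
  calc ∫ τ in Ioc 0 x, exp (-τ ^ 2) ≤ ∫ τ in Ioi 0, exp (-τ ^ 2) :=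
        setIntegral_mono_set hint (.of_forall fun _ => (exp_pos _).le)
          Ioc_subset_Ioi_self.eventuallyLE
    _ = √π / 2 := by simpa using integral_gaussian_Ioi 1

lemma abs_erfc_le_two (x : ℝ) : |erfc x| ≤ 2 := by
  calc |erfc x| ≤ |1| + |2 / √π * ∫ τ in (0:ℝ)..x, exp (-τ ^ 2)| := abs_sub _ _
    _ ≤ 1 + 2 / √π * (√π / 2) := by
        rw [abs_one, abs_mul, abs_of_pos (by positivity : 0 < 2 / √π)]
        gcongr
        exact abs_integral_exp_neg_sq_le x
    _ = 2 := by field_simp; norm_num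

lemma integral_exp_neg_mul_mul_inv_sqrt {s : ℝ} (hs : 0 < s) :
    ∫ t in Ioi 0, exp (-s * t) * (√t)⁻¹ = √π / √s := by
  have h := integral_rpow_mul_exp_neg_mul_Ioi one_half_pos hs
  rw [Gamma_one_half_eq, ← sqrt_eq_rpow, sqrt_div' _ hs.le, sqrt_one, one_div_mul_eq_div] at h
  rw [← h]
  refine setIntegral_congr_fun measurableSet_Ioi fun t ht => ?_
  rw [show (1 / 2 : ℝ) - 1 = -(1 / 2) by norm_num, rpow_neg ht.le, ← sqrt_eq_rpow, neg_mul,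
    mul_comm]

lemma hasDerivAt_exp_mul_erfc_mul_sqrt (a s : ℝ) {t : ℝ} (ht : 0 < t) :
    HasDerivAt (fun u => exp ((a ^ 2 - s) * u) * erfc (a * √u))
      ((a ^ 2 - s) * (exp ((a ^ 2 - s) * t) * erfc (a * √t))
        - a / √π * (exp (-s * t) * (√t)⁻¹)) t := by
  have hexp : HasDerivAt (fun u => exp ((a ^ 2 - s) * u)) (exp ((a ^ 2 - s) * t) * (a ^ 2 - s)) t :=
    ((hasDerivAt_id t).const_mul _).exp.congr_deriv (by simp)
  have herfc := (hasDerivAt_erfc (a * √t)).comp t ((hasDerivAt_sqrt ht.ne').const_mul a)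
  refine (hexp.mul herfc).congr_deriv ?_
  have hsq : (a * √t) ^ 2 = a ^ 2 * t := by rw [mul_pow, sq_sqrt ht.le]
  have hsplit : exp (-s * t) = exp ((a ^ 2 - s) * t) * exp (-(a ^ 2 * t)) := by
    rw [← exp_add]; ring_nf
  rw [hsq, hsplit, Function.comp_apply]
  field_simp
  ring

lemma norm_exp_mul_erfc_mul_sqrt_le (a c t : ℝ) :
    ‖exp (c * t) * erfc (a * √t)‖ ≤ 2 * exp (c * t) := by
  rw [norm_mul, norm_of_nonneg (exp_pos _).le, mul_comm, norm_eq_abs]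
  exact mul_le_mul_of_nonneg_right (abs_erfc_le_two _) (exp_pos _).le

lemma integrableOn_exp_mul_erfc_mul_sqrt {a s : ℝ} (has : a ^ 2 < s) :
    IntegrableOn (fun t => exp ((a ^ 2 - s) * t) * erfc (a * √t)) (Ioi 0) :=
  ((integrableOn_exp_mul_Ioi (sub_neg.2 has) 0).const_mul 2).mono'
    (by fun_prop) (.of_forall fun t => norm_exp_mul_erfc_mul_sqrt_le a _ t)

lemma tendsto_exp_mul_erfc_mul_sqrt_atTop {a s : ℝ} (has : a ^ 2 < s) :
    Tendsto (fun t => exp ((a ^ 2 - s) * t) * erfc (a * √t)) atTop (𝓝 0) := by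
  refine squeeze_zero_norm (norm_exp_mul_erfc_mul_sqrt_le a _) ?_
  simpa using ((tendsto_exp_atBot.comp
    (tendsto_id.const_mul_atTop_of_neg (sub_neg.2 has))).const_mul 2)

lemma add_sqrt_pos_of_sq_lt {a s : ℝ} (has : a ^ 2 < s) : 0 < a + √s := by
  linarith [lt_sqrt_of_sq_lt (x := -a) (by rwa [neg_sq])]

lemma sqrt_sub_pos_of_sq_lt {a s : ℝ} (has : a ^ 2 < s) : 0 < √s - a := by
  linarith [lt_sqrt_of_sq_lt has]

theorem integral_exp_mul_erfc_mul_sqrt {a s : ℝ} (has : a ^ 2 < s) :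
    ∫ t in Ioi 0, exp ((a ^ 2 - s) * t) * erfc (a * √t) = 1 / (√s * (a + √s)) := by
  have hs : 0 < s := (sq_nonneg a).trans_lt has
  have hint := integrableOn_exp_mul_erfc_mul_sqrt has
  have hkernel : IntegrableOn (fun t => exp (-s * t) * (√t)⁻¹) (Ioi 0) :=
    Integrable.of_integral_ne_zero (by rw [integral_exp_neg_mul_mul_inv_sqrt hs]; positivity)
  have hFTC := integral_Ioi_of_hasDerivAt_of_tendsto (by fun_prop)
    (fun t ht => hasDerivAt_exp_mul_erfc_mul_sqrt a s ht)
    ((hint.const_mul _).sub (hkernel.const_mul _)) (tendsto_exp_mul_erfc_mul_sqrt_atTop has)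
  rw [integral_sub (hint.const_mul _) (hkernel.const_mul _), integral_const_mul,
    integral_const_mul, integral_exp_neg_mul_mul_inv_sqrt hs] at hFTC
  simp only [mul_zero, exp_zero, sqrt_zero, erfc_zero] at hFTC
  set I := ∫ t in Ioi 0, exp ((a ^ 2 - s) * t) * erfc (a * √t)
  have hu := sqrt_pos.2 hs
  field_simp at hFTC
  rw [eq_div_iff (mul_pos hu (add_sqrt_pos_of_sq_lt has)).ne']
  -- `s - a² = (√s - a) (√s + a)`
  refine mul_left_cancel₀ (sqrt_sub_pos_of_sq_lt has).ne' ?_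
  linear_combination -hFTC + I * √s * sq_sqrt hs.le

theorem laplace_expected_intensity_half_general (Λ₀ γ α : ℝ)
    (hα : α ∈ Set.Ioo (0:ℝ) 1) (s : ℝ) (hs : (1-α)^2 * γ^2 < s) :
    ∫ t in Set.Ioi (0:ℝ), Real.exp (-s * t) *
        (Λ₀ / (1-α) - (α * Λ₀ / (1-α)) * Real.exp ((1-α)^2 * γ^2 * t) *
          erfc ((1-α) * γ * Real.sqrt t))
      = (Λ₀ / s) * (γ + Real.sqrt s) / ((1-α) * γ + Real.sqrt s) := by
  have has : ((1 - α) * γ) ^ 2 < s := by rwa [mul_pow]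
  have hs0 : 0 < s := (sq_nonneg _).trans_lt has
  have hintegrand : ∀ t, exp (-s * t) * (Λ₀ / (1 - α) - α * Λ₀ / (1 - α) *
      exp ((1 - α) ^ 2 * γ ^ 2 * t) * erfc ((1 - α) * γ * √t)) =
        Λ₀ / (1 - α) * exp (-s * t) - α * Λ₀ / (1 - α) *
          (exp ((((1 - α) * γ) ^ 2 - s) * t) * erfc ((1 - α) * γ * √t)) :=
    fun t => by
      rw [show (((1 - α) * γ) ^ 2 - s) * t = -s * t + (1 - α) ^ 2 * γ ^ 2 * t by ring, exp_add]
      ring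
  simp_rw [hintegrand]
  rw [integral_sub ((integrableOn_exp_mul_Ioi (neg_neg_of_pos hs0) 0).const_mul _)
      ((integrableOn_exp_mul_erfc_mul_sqrt has).const_mul _), integral_const_mul,
    integral_const_mul, integral_exp_mul_Ioi (neg_neg_of_pos hs0),
    integral_exp_mul_erfc_mul_sqrt has, mul_zero, exp_zero]
  have hα1 : 1 - α ≠ 0 := sub_ne_zero.2 hα.2.ne'
  have hsa : (1 - α) * γ + √s ≠ 0 := (add_sqrt_pos_of_sq_lt has).ne'
  field_simp
  linear_combination Λ₀ * α * mul_self_sqrt hs0.le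

theorem laplace_expected_intensity_half (Λ₀ γ α : ℝ) (hΛ : 0 < Λ₀) (hγ : 0 < γ)
    (hα : α ∈ Set.Ioo (0:ℝ) 1) (s : ℝ) (hs : (1-α)^2 * γ^2 < s) :
    ∫ t in Set.Ioi (0:ℝ), Real.exp (-s * t) *
        (Λ₀ / (1-α) - (α * Λ₀ / (1-α)) * Real.exp ((1-α)^2 * γ^2 * t) *
          erfc ((1-α) * γ * Real.sqrt t))
      = (Λ₀ / s) * (γ + Real.sqrt s) / ((1-α) * γ + Real.sqrt s) :=
  laplace_expected_intensity_half_general Λ₀ γ α hα s hs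
end

section
/- Let Λ₀ > 0, γ > 0, α ∈ (0,1), β ∈ (0,1), and define λ(t) = Λ₀/(1-α) - (αΛ₀/(1-α))·E_β((α-1)γ t^β), where E_β is the one-parameter Mittag-Leffler function. Then the Laplace transform of λ equals λ̃(s) = (Λ₀/s)·(γ + s^β)/((1-α)γ + s^β) for s > ((1-α)γ)^{1/β}. -/
/-!
Expand the Mittag-Leffler function into its series and take Laplace transforms term by term:
since `∫₀^∞ e^{-st} t^{βk} dt = Γ(βk+1)/s^{βk+1}`, the Gamma factors cancel and
`t ↦ E_β(c t^β)` transforms into the geometric series `∑ (c/s^β)^k / s = s^{β-1}/(s^β - c)`,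
valid for `|c| < s^β`. The same computation with `|c|` bounds the `L¹` norms of the terms,
which justifies the interchange of sum and integral. The intensity is an affine combination
of `1` and `E_β((α-1)γ t^β)`, and `|(α-1)γ| < s^β` is exactly the hypothesis on `s`.
No separate convergence result for the Mittag-Leffler series is needed: the `L¹` bound makes
it converge almost everywhere.
-/

noncomputable def mlOne (β z : ℝ) : ℝ := ∑' k : ℕ, z ^ k / Real.Gamma (β * k + 1)

open MeasureTheory Real Set

lemma integrableOn_exp_neg_mul_mul_rpow {s a : ℝ} (hs : 0 < s) (ha : -1 < a) :
    IntegrableOn (fun t ↦ exp (-s * t) * t ^ a) (Ioi 0) := by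
  refine (integrableOn_rpow_mul_exp_neg_mul_rpow ha one_pos hs).congr_fun
    (fun t _ ↦ ?_) measurableSet_Ioi
  simp only [rpow_one, mul_comm]

lemma integral_exp_neg_mul_mul_rpow {s a : ℝ} (hs : 0 < s) (ha : -1 < a) :
    ∫ t in Ioi 0, exp (-s * t) * t ^ a = Gamma (a + 1) / s ^ (a + 1) := by
  have h := integral_rpow_mul_exp_neg_mul_Ioi (a := a + 1) (by linarith) hs
  rw [add_sub_cancel_right, one_div, inv_rpow hs.le, inv_mul_eq_div] at h
  rw [← h]
  refine setIntegral_congr_fun measurableSet_Ioi (fun t _ ↦ ?_)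
  rw [neg_mul, mul_comm]

noncomputable def mlTerm (β z : ℝ) (k : ℕ) : ℝ := z ^ k / Gamma (β * k + 1)

lemma mlOne_eq_tsum_mlTerm (β z : ℝ) : mlOne β z = ∑' k, mlTerm β z k := rfl

section LaplaceTransform

variable {β s : ℝ} (c : ℝ) (k : ℕ)

lemma mlTerm_mul_rpow {t : ℝ} (ht : 0 ≤ t) :
    mlTerm β (c * t ^ β) k = c ^ k / Gamma (β * k + 1) * t ^ (β * k) := by
  rw [mlTerm, mul_pow, rpow_mul ht, rpow_natCast]
  ring

lemma norm_mlTerm_mul_rpow (hβ : 0 ≤ β) {t : ℝ} (ht : 0 ≤ t) :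
    ‖mlTerm β (c * t ^ β) k‖ = mlTerm β (|c| * t ^ β) k := by
  have hΓ : 0 < Gamma (β * k + 1) := Gamma_pos_of_pos (by positivity)
  rw [mlTerm, mlTerm, norm_div, norm_pow, norm_mul, norm_of_nonneg (rpow_nonneg ht β),
    norm_of_nonneg hΓ.le, norm_eq_abs]

lemma integrableOn_exp_neg_mul_mul_mlTerm (hβ : 0 ≤ β) (hs : 0 < s) :
    IntegrableOn (fun t ↦ exp (-s * t) * mlTerm β (c * t ^ β) k) (Ioi 0) := by
  have hβk : -1 < β * k := by linarith [show 0 ≤ β * k by positivity]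
  refine IntegrableOn.congr_fun ((integrableOn_exp_neg_mul_mul_rpow hs hβk).const_mul
    (c ^ k / Gamma (β * k + 1))) (fun t ht ↦ ?_) measurableSet_Ioi
  rw [mlTerm_mul_rpow c k (le_of_lt ht)]
  ring

lemma integral_exp_neg_mul_mul_mlTerm (hβ : 0 ≤ β) (hs : 0 < s) :
    ∫ t in Ioi 0, exp (-s * t) * mlTerm β (c * t ^ β) k = (c / s ^ β) ^ k / s := by
  have hΓ : 0 < Gamma (β * k + 1) := Gamma_pos_of_pos (by positivity)
  have hβk : -1 < β * k := by linarith [show 0 ≤ β * k by positivity]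
  calc ∫ t in Ioi 0, exp (-s * t) * mlTerm β (c * t ^ β) k
      = ∫ t in Ioi 0, c ^ k / Gamma (β * k + 1) * (exp (-s * t) * t ^ (β * k)) :=
        setIntegral_congr_fun measurableSet_Ioi fun t ht ↦ by
          rw [mlTerm_mul_rpow c k (le_of_lt ht)]; ring
    _ = c ^ k / Gamma (β * k + 1) * (Gamma (β * k + 1) / ((s ^ β) ^ k * s)) := by
        rw [integral_const_mul, integral_exp_neg_mul_mul_rpow hs hβk,
          rpow_add hs, rpow_one, rpow_mul hs.le, rpow_natCast]
    _ = (c / s ^ β) ^ k / s := by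
        rw [div_pow]
        field_simp

end LaplaceTransform

theorem integral_exp_neg_mul_mlOne {β c s : ℝ} (hβ : 0 ≤ β) (hs : 0 < s) (hc : |c| < s ^ β) :
    ∫ t in Ioi 0, exp (-s * t) * mlOne β (c * t ^ β) = s ^ (β - 1) / (s ^ β - c) := by
  have hsβ : 0 < s ^ β := rpow_pos_of_pos hs β
  have hratio : |c / s ^ β| < 1 := by rwa [abs_div, abs_of_pos hsβ, div_lt_one hsβ]
  have hnorm : ∀ k : ℕ, ∫ t in Ioi 0, ‖exp (-s * t) * mlTerm β (c * t ^ β) k‖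
      = (|c| / s ^ β) ^ k / s := fun k ↦ by
    rw [← integral_exp_neg_mul_mul_mlTerm |c| k hβ hs]
    refine setIntegral_congr_fun measurableSet_Ioi fun t ht ↦ ?_
    rw [norm_mul, norm_mlTerm_mul_rpow c k hβ (le_of_lt ht), norm_of_nonneg (exp_pos _).le]
  have hsummable : Summable fun k : ℕ ↦ (|c| / s ^ β) ^ k / s :=
    (summable_geometric_of_lt_one (by positivity)
      (by rwa [← abs_of_pos hsβ, ← abs_div])).div_const s
  have hseries := hasSum_integral_of_summable_integral_norm
    (fun k ↦ integrableOn_exp_neg_mul_mul_mlTerm c k hβ hs) (by simpa only [hnorm] using hsummable)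
  simp only [integral_exp_neg_mul_mul_mlTerm c _ hβ hs, tsum_mul_left,
    ← mlOne_eq_tsum_mlTerm] at hseries
  rw [hseries.unique ((hasSum_geometric_of_abs_lt_one hratio).div_const s),
    rpow_sub_one hs.ne']
  have : s ^ β - c ≠ 0 := by linarith [le_abs_self c]
  field_simp

theorem integrableOn_exp_neg_mul_mlOne {β c s : ℝ} (hβ : 0 ≤ β) (hs : 0 < s)
    (hc : |c| < s ^ β) :
    IntegrableOn (fun t ↦ exp (-s * t) * mlOne β (c * t ^ β)) (Ioi 0) := by
  -- The Bochner integral of a non-integrable function is `0`.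
  refine Integrable.of_integral_ne_zero ?_
  rw [integral_exp_neg_mul_mlOne hβ hs hc]
  have : 0 < s ^ β - c := by linarith [le_abs_self c]
  positivity

theorem laplace_expected_intensity_general (Λ₀ γ α β : ℝ) (hγ : 0 < γ)
    (hα : α ∈ Set.Ioo (0:ℝ) 1) (hβ : β ∈ Set.Ioo (0:ℝ) 1)
    (s : ℝ) (hs : ((1-α) * γ) ^ (1/β) < s) :
    ∫ t in Set.Ioi (0:ℝ), Real.exp (-s * t) *
        (Λ₀ / (1-α) - (α * Λ₀ / (1-α)) * mlOne β ((α-1) * γ * t ^ β))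
      = (Λ₀ / s) * (γ + s ^ β) / ((1-α) * γ + s ^ β) := by
  obtain ⟨-, hα1⟩ := hα
  obtain ⟨hβ0, -⟩ := hβ
  have hrate : 0 < (1 - α) * γ := mul_pos (by linarith) hγ
  have hs0 : 0 < s := (rpow_nonneg hrate.le _).trans_lt hs
  have hc : |(α - 1) * γ| < s ^ β := by
    rw [abs_mul, abs_of_neg (by linarith), abs_of_pos hγ, neg_sub]
    simpa [← rpow_mul hrate.le, hβ0.ne'] using rpow_lt_rpow (by positivity) hs hβ0
  have hexp : ∫ t in Ioi (0:ℝ), exp (-s * t) = 1 / s := by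
    simpa using integral_exp_mul_Ioi (neg_neg_of_pos hs0) 0
  calc ∫ t in Ioi (0:ℝ), exp (-s * t) *
        (Λ₀ / (1-α) - (α * Λ₀ / (1-α)) * mlOne β ((α-1) * γ * t ^ β))
      = ∫ t in Ioi (0:ℝ), (Λ₀ / (1-α) * exp (-s * t)
          - α * Λ₀ / (1-α) * (exp (-s * t) * mlOne β ((α-1) * γ * t ^ β))) := by
        congr 1 with t; ring
    _ = Λ₀ / (1-α) * (1 / s) - α * Λ₀ / (1-α) * (s ^ (β - 1) / (s ^ β - (α - 1) * γ)) := by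
        rw [integral_sub ((integrableOn_exp_mul_Ioi (neg_neg_of_pos hs0) 0).const_mul _)
          ((integrableOn_exp_neg_mul_mlOne hβ0.le hs0 hc).const_mul _), integral_const_mul,
          integral_const_mul, hexp, integral_exp_neg_mul_mlOne hβ0.le hs0 hc]
    _ = (Λ₀ / s) * (γ + s ^ β) / ((1-α) * γ + s ^ β) := by
        have : 1 - α ≠ 0 := by linarith
        have : (1 - α) * γ + s ^ β ≠ 0 := by positivity
        rw [rpow_sub_one hs0.ne', show s ^ β - (α - 1) * γ = (1 - α) * γ + s ^ β by ring]
        field_simp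
        ring

theorem laplace_expected_intensity (Λ₀ γ α β : ℝ) (hΛ : 0 < Λ₀) (hγ : 0 < γ)
    (hα : α ∈ Set.Ioo (0:ℝ) 1) (hβ : β ∈ Set.Ioo (0:ℝ) 1)
    (s : ℝ) (hs : ((1-α) * γ) ^ (1/β) < s) :
    ∫ t in Set.Ioi (0:ℝ), Real.exp (-s * t) *
        (Λ₀ / (1-α) - (α * Λ₀ / (1-α)) * mlOne β ((α-1) * γ * t ^ β))
      = (Λ₀ / s) * (γ + s ^ β) / ((1-α) * γ + s ^ β) :=
  laplace_expected_intensity_general Λ₀ γ α β hγ hα hβ s hs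
end
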